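/- arXiv:2106.00714 — 4 statements merged into one kernel-verified Lean document; each statement's English description precedes it below -/
import Mathlib

section
/- If A[1 ← i] denotes the n×n matrix A with row 1 replaced by a copy of row i (for i ≥ 2), then perm(A[1 ← i]) = Σ_{j ≠ k} a_{ij} a_{ik} · perm(A with rows {1,i} and columns {j,k} deleted), where the sum is over ordered pairs of distinct column indices. -/
/-- The permanent of a square matrix. -/
def Matrix.perm {n : ℕ} {R : Type*} [CommRing R] (A : Matrix (Fin n) (Fin n) R) : R :=
  ∑ σ : Equiv.Perm (Fin n), ∏ i, A i (σ i)

/-- The submatrix of `A` obtained by deleting the rows indexed by `s` and the columns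
indexed by `t` (the remaining rows and columns are kept in increasing order); the
result is a `k × k` matrix (junk value if the cardinalities do not match). -/
def Matrix.delSub {m k : ℕ} {R : Type*} [CommRing R] (A : Matrix (Fin m) (Fin m) R)
    (s t : Finset (Fin m)) : Matrix (Fin k) (Fin k) R :=
  if h : sᶜ.card = k ∧ tᶜ.card = k then
    A.submatrix (fun a => (sᶜ.orderIsoOfFin h.1 a : Fin m))
      (fun b => (tᶜ.orderIsoOfFin h.2 b : Fin m))
  else 0


/-!
Sort the permutations `σ` in `perm (A[1 ← i]) = ∑ σ, ∏ r, A[1 ← i] r (σ r)` by the pair of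
columns `(σ 1, σ i) = (j, k)`, necessarily with `j ≠ k`. Permutations taking these two values
are the same thing as bijections from the remaining rows to the remaining columns, so the fiber
contributes `a_{ij} a_{ik}` times the permanent of the minor. Row `1` is deleted from that minor,
so it is the same for `A[1 ← i]` and for `A`.
-/

open Finset Equiv

namespace Equiv.Perm

variable {α : Type*} {s t : Finset α} {π : Perm α}

theorem exists_apply_eq_and_apply_eq [DecidableEq α] {a b c d : α} (hab : a ≠ b)
    (hcd : c ≠ d) : ∃ π : Perm α, π a = c ∧ π b = d := by
  refine ⟨swap (swap a c b) d * swap a c, ?_, ?_⟩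
  · have hc : c ≠ swap a c b := fun h => hab.symm (by simpa [swap_apply_eq_iff] using h.symm)
    simp [swap_apply_of_ne_of_ne hc hcd]
  · simp

theorem notMem_iff_apply_notMem_of_eqOn (hπ : ∀ x, x ∈ s ↔ π x ∈ t) {σ : Perm α}
    (hσ : ∀ x ∈ s, σ x = π x) (x : α) : x ∉ s ↔ σ x ∉ t := by
  refine not_congr ⟨fun hx => hσ x hx ▸ (hπ x).1 hx, fun hx => ?_⟩
  have hy : π.symm (σ x) ∈ s := (hπ _).2 (by simpa using hx)
  have hyx : π.symm (σ x) = x := σ.injective (by rw [hσ _ hy, apply_symm_apply])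
  exact hyx ▸ hy

def eqOnEquivComplEquiv [DecidableEq α] (hπ : ∀ x, x ∈ s ↔ π x ∈ t) :
    {σ : Perm α // ∀ x ∈ s, σ x = π x} ≃ ({x // x ∉ s} ≃ {x // x ∉ t}) where
  toFun σ := σ.1.subtypeEquiv (notMem_iff_apply_notMem_of_eqOn hπ σ.2)
  invFun g := ⟨Equiv.subtypeCongr (π.subtypeEquiv hπ) g, fun x hx => by
    simp [Equiv.subtypeCongr, sumCompl_symm_apply_of_pos hx]⟩
  left_inv σ := Subtype.ext <| Equiv.ext fun x => by
    by_cases hx : x ∈ s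
    · simp [Equiv.subtypeCongr, sumCompl_symm_apply_of_pos hx, σ.2 x hx]
    · simp [Equiv.subtypeCongr, sumCompl_symm_apply_of_neg hx]
  right_inv g := by
    ext x
    simp [Equiv.subtypeCongr, sumCompl_symm_apply_of_neg x.2]

theorem sum_filter_eqOn_prod {R : Type*} [CommRing R] [Fintype α] [DecidableEq α]
    (B : α → α → R) (hπ : ∀ x, x ∈ s ↔ π x ∈ t) :
    ∑ σ ∈ univ.filter (fun σ : Perm α => ∀ x ∈ s, σ x = π x), ∏ r, B r (σ r) =
      (∏ x ∈ s, B x (π x)) * ∑ g : {x // x ∉ s} ≃ {x // x ∉ t}, ∏ x : {x // x ∉ s}, B x (g x) := by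
  rw [sum_subtype (p := fun σ : Perm α => ∀ x ∈ s, σ x = π x) _ (fun σ => by simp),
    ← (eqOnEquivComplEquiv hπ).symm.sum_comp, mul_sum]
  refine sum_congr rfl fun g _ => ?_
  rw [← prod_mul_prod_compl s, prod_subtype sᶜ (fun _ => mem_compl)]
  congr 1
  · refine prod_congr rfl fun x hx => ?_
    simp [eqOnEquivComplEquiv, Equiv.subtypeCongr, sumCompl_symm_apply_of_pos hx]
  · refine Fintype.prod_congr _ _ fun x => ?_
    simp [eqOnEquivComplEquiv, Equiv.subtypeCongr, sumCompl_symm_apply_of_neg x.2]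

end Equiv.Perm

namespace Matrix

variable {R : Type*} [CommRing R]

theorem perm_submatrix_eq_sum_equiv {k : ℕ} {β γ : Type*} [Fintype β] [Fintype γ]
    [DecidableEq β] [DecidableEq γ] (M : Matrix β γ R) (e : Fin k ≃ β) (f : Fin k ≃ γ) :
    (M.submatrix e f).perm = ∑ g : β ≃ γ, ∏ x, M x (g x) := by
  refine Fintype.sum_equiv (equivCongr e f) _ _ fun τ => ?_
  rw [← e.prod_comp]
  simp

theorem perm_delSub_eq_sum_equiv {m k : ℕ} (B : Matrix (Fin m) (Fin m) R)
    {s t : Finset (Fin m)} (hs : sᶜ.card = k) (ht : tᶜ.card = k) :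
    (B.delSub (k := k) s t).perm =
      ∑ g : {x // x ∉ s} ≃ {x // x ∉ t}, ∏ x : {x // x ∉ s}, B x (g x) := by
  rw [delSub, dif_pos ⟨hs, ht⟩]
  exact perm_submatrix_eq_sum_equiv (B.submatrix (↑) (↑))
    ((sᶜ.orderIsoOfFin hs).toEquiv.trans (subtypeEquivRight fun _ => mem_compl) :
      Fin k ≃ {x // x ∉ s})
    ((tᶜ.orderIsoOfFin ht).toEquiv.trans (subtypeEquivRight fun _ => mem_compl) :
      Fin k ≃ {x // x ∉ t})

theorem delSub_updateRow {m k : ℕ} (A : Matrix (Fin m) (Fin m) R) (v : Fin m → R)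
    {r : Fin m} {s t : Finset (Fin m)} (hr : r ∈ s) :
    (A.updateRow r v).delSub (k := k) s t = A.delSub s t := by
  unfold delSub
  split_ifs with h
  · ext a b
    have hne : (sᶜ.orderIsoOfFin h.1 a : Fin m) ≠ r := fun he =>
      mem_compl.1 (he ▸ (sᶜ.orderIsoOfFin h.1 a).2) hr
    rw [submatrix_apply, submatrix_apply, updateRow_ne hne]
  · rfl

theorem perm_eq_sum_sum_filter_apply_pair {m : ℕ} (B : Matrix (Fin m) (Fin m) R)
    {a b : Fin m} (hab : a ≠ b) :
    B.perm = ∑ j, ∑ k ∈ univ \ {j},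
      ∑ σ ∈ univ.filter (fun σ : Perm (Fin m) => σ a = j ∧ σ b = k), ∏ r, B r (σ r) := by
  rw [perm, ← sum_fiberwise univ fun σ : Perm (Fin m) => σ a]
  refine sum_congr rfl fun j _ => ?_
  rw [← sum_fiberwise_of_maps_to (g := fun σ : Perm (Fin m) => σ b) (t := univ \ {j})]
  · simp only [filter_filter]
  · intro σ hσ
    rw [mem_filter] at hσ
    simpa [← hσ.2] using σ.injective.ne hab.symm

theorem sum_filter_apply_pair_prod {n : ℕ} (B : Matrix (Fin (n + 2)) (Fin (n + 2)) R)
    {a b c d : Fin (n + 2)} (hab : a ≠ b) (hcd : c ≠ d) :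
    ∑ σ ∈ univ.filter (fun σ : Perm (Fin (n + 2)) => σ a = c ∧ σ b = d), ∏ r, B r (σ r) =
      B a c * B b d * (B.delSub (k := n) {a, b} {c, d}).perm := by
  obtain ⟨π, hπa, hπb⟩ := Perm.exists_apply_eq_and_apply_eq hab hcd
  have hπ : ∀ x, x ∈ ({a, b} : Finset _) ↔ π x ∈ ({c, d} : Finset _) := by
    simp [← hπa, ← hπb]
  have hcard : ∀ {x y : Fin (n + 2)}, x ≠ y → ({x, y} : Finset _)ᶜ.card = n := fun hxy => by
    rw [card_compl, card_pair hxy, Fintype.card_fin, Nat.add_sub_cancel]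
  rw [perm_delSub_eq_sum_equiv B (hcard hab) (hcard hcd)]
  convert Perm.sum_filter_eqOn_prod B hπ using 2
  · ext σ
    simp [← hπa, ← hπb]
  · rw [prod_pair hab, hπa, hπb]

end Matrix

/-- Expanding `perm (A[1 ← i])` (row `1` replaced by a copy of row `i`, `i ≠ 1`;
here rows are indexed from `0`) along the two equal rows:
`perm (A[1 ← i]) = Σ_{j ≠ k} a_{ij} a_{ik} · perm (A with rows {1,i} and columns
{j,k} deleted)`, the sum being over ordered pairs of distinct column indices. -/
theorem perm_updateRow_copy_expand {n : ℕ} {R : Type*} [CommRing R]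
    (A : Matrix (Fin (n + 2)) (Fin (n + 2)) R) (i : Fin (n + 2)) (hi : i ≠ 0) :
    (A.updateRow 0 (A i)).perm =
      ∑ j, ∑ k ∈ Finset.univ \ {j},
        A i j * A i k * (Matrix.delSub (k := n) A {0, i} {j, k}).perm := by
  rw [Matrix.perm_eq_sum_sum_filter_apply_pair _ hi.symm]
  refine sum_congr rfl fun j _ => sum_congr rfl fun k hk => ?_
  have hjk : j ≠ k := fun h => (mem_sdiff.1 hk).2 (mem_singleton.2 h.symm)
  rw [Matrix.sum_filter_apply_pair_prod _ hi.symm hjk,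
    Matrix.delSub_updateRow _ _ (mem_insert_self 0 {i}), Matrix.updateRow_self,
    Matrix.updateRow_ne hi]
end

section
/- For a matrix A over a commutative ring in which row 1 is replaced by a copy of row i (i ≥ 2), the permanent is divisible by 2 in the sense that perm(A[1 ← i]) = 2 · Σ_{j < k} a_{ij} a_{ik} · perm(A[{1,i}̂, {j,k}̂]). -/
open Finset

def Equiv.subtypeCongrEquiv {ι : Type*} (p q : ι → Prop) [DecidablePred p] [DecidablePred q] :
    ({ x // p x } ≃ { x // q x }) × ({ x // ¬p x } ≃ { x // ¬q x }) ≃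
      { σ : Equiv.Perm ι // ∀ x, p x ↔ q (σ x) } where
  toFun ef := ⟨Equiv.subtypeCongr ef.1 ef.2, fun x => by
    by_cases hx : p x
    · simpa [Equiv.subtypeCongr, Equiv.sumCompl, hx] using (ef.1 ⟨x, hx⟩).2
    · simpa [Equiv.subtypeCongr, Equiv.sumCompl, hx] using (ef.2 ⟨x, hx⟩).2⟩
  invFun σ := (σ.1.subtypeEquiv σ.2, σ.1.subtypeEquiv fun x => not_congr (σ.2 x))
  left_inv ef := by
    ext x <;> simp [Equiv.subtypeCongr, Equiv.sumCompl, x.2]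
  right_inv σ := by
    ext x
    by_cases hx : p x <;> simp [Equiv.subtypeCongr, Equiv.sumCompl, hx]

theorem Equiv.Perm.map_finset_eq_iff {ι : Type*} [DecidableEq ι] (σ : Equiv.Perm ι)
    (s t : Finset ι) : s.map σ.toEmbedding = t ↔ ∀ x, x ∈ s ↔ σ x ∈ t := by
  constructor
  · rintro rfl x
    simp
  · intro h
    ext y
    rw [mem_map_equiv, h, Equiv.apply_symm_apply]

theorem Finset.injOn_pair {α : Type*} [LinearOrder α] :
    Set.InjOn (fun p : α × α => ({p.1, p.2} : Finset α)) {p | p.1 < p.2} := by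
  rintro ⟨a, b⟩ hab ⟨c, d⟩ hcd (h : ({a, b} : Finset α) = {c, d})
  have ha : a ∈ ({c, d} : Finset α) := h ▸ mem_insert_self a {b}
  have hb : b ∈ ({c, d} : Finset α) := h ▸ mem_insert_of_mem (mem_singleton_self b)
  have hc : c ∈ ({a, b} : Finset α) := h ▸ mem_insert_self c {d}
  simp only [Set.mem_ofPred_eq, mem_insert, mem_singleton] at hab hcd ha hb hc
  grind

theorem Finset.card_compl_pair_fin {m : ℕ} {x y : Fin (m + 2)} (h : x ≠ y) :
    ({x, y} : Finset (Fin (m + 2)))ᶜ.card = m := by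
  rw [card_compl, card_pair h]
  simp

namespace Matrix

section BijPerm

variable {R : Type*} [CommSemiring R] {m n : Type*} [Fintype m] [DecidableEq m] [Fintype n]
  [DecidableEq n]

/-- Permanent of a block `A[s, t]`, whose row and column index types differ; it is `0` when they
have different cardinalities. -/
def bijPerm (M : Matrix m n R) : R :=
  ∑ e : m ≃ n, ∏ x, M x (e x)

theorem bijPerm_submatrix_equiv {m' n' : Type*} [Fintype m'] [DecidableEq m'] [Fintype n']
    [DecidableEq n'] (M : Matrix m n R) (e : m' ≃ m) (f : n' ≃ n) :
    bijPerm (M.submatrix e f) = bijPerm M :=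
  Fintype.sum_equiv (e.equivCongr f) _ _ fun π => by
    simp [← e.prod_comp]

theorem bijPerm_replicateRow (h : Fintype.card m = Fintype.card n) (v : n → R) :
    bijPerm (replicateRow m v) = (Fintype.card m).factorial * ∏ y, v y := by
  simp [bijPerm, Equiv.prod_comp, Fintype.card_equiv (Fintype.equivOfCardEq h)]

end BijPerm

variable {R : Type*} [CommSemiring R] {ι : Type*}

theorem sum_perm_filter_map_eq_bijPerm_mul_bijPerm [Fintype ι] [DecidableEq ι] (A : Matrix ι ι R)
    (s t : Finset ι) :
    ∑ σ ∈ univ.filter (fun σ : Equiv.Perm ι => s.map σ.toEmbedding = t), ∏ r, A r (σ r) =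
      bijPerm (A.toBlock (· ∈ s) (· ∈ t)) * bijPerm (A.toBlock (· ∉ s) (· ∉ t)) := by
  rw [sum_subtype _ (p := fun σ : Equiv.Perm ι => ∀ x, x ∈ s ↔ σ x ∈ t)
      (fun σ => by simp [Equiv.Perm.map_finset_eq_iff]),
    bijPerm, bijPerm, sum_mul_sum, ← Fintype.sum_prod_type',
    ← (Equiv.subtypeCongrEquiv (· ∈ s) (· ∈ t)).sum_comp]
  refine Fintype.sum_congr _ _ fun ef => ?_
  rw [← Fintype.prod_subtype_mul_prod_subtype (M := R) (· ∈ s)]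
  congr 1
  · simp only [Equiv.subtypeCongrEquiv, Equiv.subtypeCongr, Equiv.sumCompl, Equiv.symm_mk,
      Equiv.coe_fn_mk, Equiv.trans_apply, SetLike.coe_mem, ↓reduceDIte, Subtype.coe_eta,
      Equiv.sumCongr_apply, Sum.map_inl, Sum.elim_inl, univ_eq_attach, toBlock_apply]
    -- the two sides carry different `Fintype` instances on `↥s`
    exact prod_congr (by ext; simp) fun _ _ => rfl
  · refine prod_congr rfl fun x _ => ?_
    simp [Equiv.subtypeCongrEquiv, Equiv.subtypeCongr, Equiv.sumCompl, x.2]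

theorem bijPerm_eq_sum_pair_laplace [Fintype ι] [LinearOrder ι] (A : Matrix ι ι R) {a b : ι}
    (hab : a ≠ b) :
    bijPerm A = ∑ p ∈ univ.filter (fun p : ι × ι => p.1 < p.2),
      bijPerm (A.toBlock (· ∈ ({a, b} : Finset ι)) (· ∈ ({p.1, p.2} : Finset ι))) *
        bijPerm (A.toBlock (· ∉ ({a, b} : Finset ι)) (· ∉ ({p.1, p.2} : Finset ι))) := by
  have hmaps : ∀ σ : Equiv.Perm ι, ({a, b} : Finset ι).map σ.toEmbedding ∈
      (univ.filter (fun p : ι × ι => p.1 < p.2)).image (fun p => {p.1, p.2}) := by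
    intro σ
    rcases (σ.injective.ne hab).lt_or_gt with h | h
    · exact mem_image.2 ⟨(σ a, σ b), by simpa using h, by simp⟩
    · exact mem_image.2 ⟨(σ b, σ a), by simpa using h, by simp [pair_comm]⟩
  rw [bijPerm, ← sum_fiberwise_of_maps_to (fun σ _ => hmaps σ),
    sum_image (injOn_pair.mono (by simp))]
  exact sum_congr rfl fun p _ => sum_perm_filter_map_eq_bijPerm_mul_bijPerm A _ _

theorem toBlock_updateRow_of_not {m n α : Type*} [DecidableEq m] {p : m → Prop} {q : n → Prop}
    {a : m} (ha : ¬p a) (A : Matrix m n α) (v : n → α) :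
    (A.updateRow a v).toBlock p q = A.toBlock p q := by
  ext x y
  rw [toBlock_apply, toBlock_apply, updateRow_ne fun hxa : (x : m) = a => ha (hxa ▸ x.2)]

theorem bijPerm_toBlock_updateRow_pair [DecidableEq ι] (A : Matrix ι ι R) {a b : ι} (hab : a ≠ b)
    {t : Finset ι} (ht : #t = 2) :
    bijPerm ((A.updateRow a (A b)).toBlock (· ∈ ({a, b} : Finset ι)) (· ∈ t)) =
      2 * ∏ y ∈ t, A b y := by
  have hrows : (A.updateRow a (A b)).toBlock (· ∈ ({a, b} : Finset ι)) (· ∈ t) =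
      replicateRow _ (fun y : t => A b y) := by
    ext ⟨x, hx⟩ y
    simp only [mem_insert, mem_singleton] at hx
    rcases hx with rfl | rfl <;> simp [hab.symm]
  have hs : #{a, b} = 2 := card_pair hab
  rw [hrows, bijPerm_replicateRow (by rw [Fintype.card_coe, Fintype.card_coe, hs, ht]),
    Fintype.card_coe, hs, prod_coe_sort t (A b)]
  norm_num

theorem perm_eq_bijPerm {n : ℕ} {R : Type*} [CommRing R] (A : Matrix (Fin n) (Fin n) R) :
    A.perm = A.bijPerm :=
  rfl

theorem perm_delSub {m k : ℕ} {R : Type*} [CommRing R] (A : Matrix (Fin m) (Fin m) R)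
    (s t : Finset (Fin m)) (hs : sᶜ.card = k) (ht : tᶜ.card = k) :
    (A.delSub (k := k) s t).perm = bijPerm (A.toBlock (· ∉ s) (· ∉ t)) := by
  unfold delSub
  rw [dif_pos ⟨hs, ht⟩, perm_eq_bijPerm]
  exact bijPerm_submatrix_equiv (A.toBlock (· ∉ s) (· ∉ t))
    ((sᶜ.orderIsoOfFin hs).toEquiv.trans (Equiv.subtypeEquivRight fun _ => mem_compl))
    ((tᶜ.orderIsoOfFin ht).toEquiv.trans (Equiv.subtypeEquivRight fun _ => mem_compl))

end Matrix

/-- Rows are indexed from `0`, so `A.updateRow 0 (A i)` is `A[1 ← i]`. -/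
theorem perm_updateRow_copy_two_mul {n : ℕ} {R : Type*} [CommRing R]
    (A : Matrix (Fin (n + 2)) (Fin (n + 2)) R) (i : Fin (n + 2)) (hi : i ≠ 0) :
    (A.updateRow 0 (A i)).perm =
      2 * ∑ p ∈ Finset.univ.filter (fun p : Fin (n + 2) × Fin (n + 2) => p.1 < p.2),
        A i p.1 * A i p.2 * (Matrix.delSub (k := n) A {0, i} {p.1, p.2}).perm := by
  rw [Matrix.perm_eq_bijPerm, Matrix.bijPerm_eq_sum_pair_laplace _ hi.symm, mul_sum]
  refine sum_congr rfl fun p hp => ?_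
  have hjk : p.1 ≠ p.2 := (mem_filter.1 hp).2.ne
  rw [Matrix.bijPerm_toBlock_updateRow_pair A hi.symm (card_pair hjk), prod_pair hjk,
    Matrix.toBlock_updateRow_of_not (by simp),
    Matrix.perm_delSub A _ _ (card_compl_pair_fin hi.symm) (card_compl_pair_fin hjk)]
  ring
end

section
/- Hafnian expansion along a row: for a symmetric 2n×2n matrix A over a commutative ring with zero diagonal (n ≥ 1), and any fixed index i, hf(A) = Σ_{j ≠ i} a_{ij} · hf(A[i,j]), where A[i,j] is A with rows and columns i and j deleted. -/
/-- The hafnian of a square matrix: the sum over all perfect matchings of the index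
set (encoded as fixed-point-free involutions `σ`) of the product of the entries
`A i (σ i)` over the edges `{i, σ i}` of the matching (taking `i < σ i`). -/
def Matrix.hafnian {m : ℕ} {R : Type*} [CommRing R] (A : Matrix (Fin m) (Fin m) R) : R :=
  ∑ σ ∈ Finset.univ.filter (fun σ : Equiv.Perm (Fin m) => σ * σ = 1 ∧ ∀ i, σ i ≠ i),
    ∏ i ∈ Finset.univ.filter (fun i => i < σ i), A i (σ i)

/-- The principal submatrix of `A` obtained by deleting the rows and columns indexed
by `s` (remaining indices kept in increasing order); junk value if the cardinality
does not match. -/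
def Matrix.delPrincipal {m k : ℕ} {R : Type*} [CommRing R] (A : Matrix (Fin m) (Fin m) R)
    (s : Finset (Fin m)) : Matrix (Fin k) (Fin k) R :=
  if h : sᶜ.card = k then
    A.submatrix (fun a => (sᶜ.orderIsoOfFin h a : Fin m))
      (fun b => (sᶜ.orderIsoOfFin h b : Fin m))
  else 0

/-!
Group the matchings `σ` by the partner `σ i = j`. Writing `e` for the increasing enumeration of
the complement of `{i, j}`, the matchings with `σ i = j` are exactly the permutations
`swap i j * τ.extendDomain e` with `τ` a matching of the complement, and `τ ↦ σ` is injective.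
Since `e` is increasing, the edges `x < σ x` of such a `σ` are `{i, j}` together with the images
of the edges of `τ`, so the weight of `σ` in `A` is `A i j` times the weight of `τ` in `A[i,j]`
(symmetry of `A` handles the case `j < i`).
-/

open Finset

namespace Equiv.Perm

variable {α β : Type*}

def IsPerfectMatching (σ : Perm α) : Prop := σ * σ = 1 ∧ ∀ x, σ x ≠ x

instance [Fintype α] [DecidableEq α] : DecidablePred (IsPerfectMatching (α := α)) :=
  fun σ => inferInstanceAs (Decidable (σ * σ = 1 ∧ ∀ x, σ x ≠ x))

theorem isPerfectMatching_iff {σ : Perm α} :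
    σ.IsPerfectMatching ↔ ∀ x, σ (σ x) = x ∧ σ x ≠ x := by
  simp only [IsPerfectMatching, Equiv.ext_iff, mul_apply, one_apply, forall_and]

theorem exists_extendDomain_eq {p : α → Prop} [DecidablePred p] (f : β ≃ Subtype p)
    {σ : Perm α} (hσ : ∀ x, ¬p x → σ x = x) : ∃ τ : Perm β, τ.extendDomain f = σ := by
  obtain ⟨τ, hτ⟩ := (Perm.subtypeEquivSubtypePerm p).surjective ⟨σ, hσ⟩
  obtain rfl : ofSubtype τ = σ := congrArg Subtype.val hτ
  refine ⟨f.symm.permCongr τ, Equiv.ext fun x => ?_⟩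
  by_cases hx : p x
  · simp [extendDomain_apply_subtype _ _ hx, ofSubtype_apply_of_mem _ hx]
  · rw [extendDomain_apply_not_subtype _ _ hx, ofSubtype_apply_of_not_mem _ hx]

section SwapExtendDomain

variable [DecidableEq α] {p : α → Prop} [DecidablePred p] (f : β ≃ Subtype p) {i j : α}

theorem swap_mul_extendDomain_injective :
    Function.Injective fun τ : Perm β => swap i j * τ.extendDomain f :=
  (mul_right_injective _).comp (extendDomainHom_injective f)

variable (hp : ∀ x, p x ↔ x ≠ i ∧ x ≠ j) (τ : Perm β)
include hp

theorem eq_or_eq_or_exists_coe_eq (x : α) : x = i ∨ x = j ∨ ∃ b, (f b : α) = x := by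
  by_cases hx : p x
  · exact .inr <| .inr ⟨f.symm ⟨x, hx⟩, by simp⟩
  · rw [hp] at hx
    tauto

theorem swap_mul_extendDomain_apply_left : (swap i j * τ.extendDomain f) i = j := by
  rw [mul_apply, extendDomain_apply_not_subtype _ _ (by simp [hp]), swap_apply_left]

theorem swap_mul_extendDomain_apply_right : (swap i j * τ.extendDomain f) j = i := by
  rw [mul_apply, extendDomain_apply_not_subtype _ _ (by simp [hp]), swap_apply_right]

theorem swap_mul_extendDomain_apply_coe (b : β) :
    (swap i j * τ.extendDomain f) (f b) = f (τ b) := by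
  have := (hp _).mp (f (τ b)).2
  rw [mul_apply, extendDomain_apply_image, swap_apply_of_ne_of_ne this.1 this.2]

theorem isPerfectMatching_swap_mul_extendDomain_iff (hij : i ≠ j) :
    (swap i j * τ.extendDomain f).IsPerfectMatching ↔ τ.IsPerfectMatching := by
  have hcases : ∀ P : α → Prop, (∀ x, P x) ↔ P i ∧ P j ∧ ∀ b, P (f b) := fun P =>
    ⟨fun h => ⟨h i, h j, fun b => h _⟩, fun ⟨hi, hj, hb⟩ x => by
      obtain rfl | rfl | ⟨b, rfl⟩ := eq_or_eq_or_exists_coe_eq f hp x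
      exacts [hi, hj, hb b]⟩
  simp only [isPerfectMatching_iff, hcases, swap_mul_extendDomain_apply_left f hp,
    swap_mul_extendDomain_apply_right f hp, swap_mul_extendDomain_apply_coe f hp,
    Subtype.coe_inj, f.injective.eq_iff, hij, hij.symm, Ne, not_false_eq_true, and_self,
    true_and]

theorem exists_swap_mul_extendDomain_eq {σ : Perm α} (hσ : σ.IsPerfectMatching)
    (hσi : σ i = j) : ∃ τ : Perm β, swap i j * τ.extendDomain f = σ := by
  have hσj : σ j = i := by rw [← hσi, (isPerfectMatching_iff.mp hσ i).1]
  obtain ⟨τ, hτ⟩ := exists_extendDomain_eq f (σ := swap i j * σ) fun x hx => by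
    obtain rfl | rfl : x = i ∨ x = j := by rw [hp] at hx; tauto
    · rw [mul_apply, hσi, swap_apply_right]
    · rw [mul_apply, hσj, swap_apply_left]
  exact ⟨τ, by rw [hτ, ← mul_assoc, swap_mul_self, one_mul]⟩

theorem filter_isPerfectMatching_apply_eq [Fintype α] [Fintype β] [DecidableEq β] (hij : i ≠ j) :
    univ.filter (fun σ : Perm α => σ.IsPerfectMatching ∧ σ i = j) =
      (univ.filter fun τ : Perm β => τ.IsPerfectMatching).image
        fun τ => swap i j * τ.extendDomain f := by
  ext σ
  simp only [mem_filter, mem_univ, true_and, mem_image]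
  constructor
  · rintro ⟨hσ, hσi⟩
    obtain ⟨τ, rfl⟩ := exists_swap_mul_extendDomain_eq f hp hσ hσi
    exact ⟨τ, (isPerfectMatching_swap_mul_extendDomain_iff f hp τ hij).mp hσ, rfl⟩
  · rintro ⟨τ, hτ, rfl⟩
    exact ⟨(isPerfectMatching_swap_mul_extendDomain_iff f hp τ hij).mpr hτ,
      swap_mul_extendDomain_apply_left f hp τ⟩

end SwapExtendDomain

end Equiv.Perm

open Equiv Equiv.Perm

namespace Matrix

section MatchingProd

variable {α β R : Type*} [LinearOrder α] [Fintype α] [LinearOrder β] [Fintype β] [CommMonoid R]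

def matchingProd (A : Matrix α α R) (σ : Perm α) : R :=
  ∏ x ∈ univ.filter (fun x => x < σ x), A x (σ x)

variable {p : α → Prop} [DecidablePred p] (e : β ≃o Subtype p) {i j : α}
  (hp : ∀ x, p x ↔ x ≠ i ∧ x ≠ j) (A : Matrix α α R) (τ : Perm β)
include hp

theorem matchingProd_swap_mul_extendDomain_of_lt (hij : i < j) :
    A.matchingProd (Equiv.swap i j * τ.extendDomain e.toEquiv) =
      A i j * (A.submatrix (fun b => (e b : α)) (fun b => e b)).matchingProd τ := by
  set σ := Equiv.swap i j * τ.extendDomain e.toEquiv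
  let E : β ↪o α := e.toOrderEmbedding.trans (OrderEmbedding.subtype p)
  have hσi : σ i = j := swap_mul_extendDomain_apply_left e.toEquiv hp τ
  have hσj : σ j = i := swap_mul_extendDomain_apply_right e.toEquiv hp τ
  have hσE : ∀ b, σ (E b) = E (τ b) := swap_mul_extendDomain_apply_coe e.toEquiv hp τ
  have hE : ∀ b, E b ≠ i ∧ E b ≠ j := fun b => (hp _).mp (e b).2
  have hsupp : univ.filter (fun x => x < σ x) =
      insert i ((univ.filter fun b => b < τ b).map E.toEmbedding) := by
    ext x
    simp only [mem_filter, mem_univ, true_and, mem_insert, mem_map]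
    obtain rfl | rfl | ⟨b, rfl⟩ := eq_or_eq_or_exists_coe_eq e.toEquiv hp x
    · simp [hσi, hij]
    · simp [hσj, hij.le, hij.ne', fun b => (hE b).2]
    · rw [show ((e.toEquiv b : Subtype p) : α) = E b from rfl]
      simp [hσE, (hE b).1]
  rw [matchingProd, hsupp, prod_insert (by simp [fun b => (hE b).1]), prod_map, hσi]
  simp_rw [RelEmbedding.coe_toEmbedding, hσE]
  rfl

theorem matchingProd_swap_mul_extendDomain (hA : A.IsSymm) (hij : i ≠ j) :
    A.matchingProd (Equiv.swap i j * τ.extendDomain e.toEquiv) =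
      A i j * (A.submatrix (fun b => (e b : α)) (fun b => e b)).matchingProd τ := by
  rcases hij.lt_or_gt with hlt | hgt
  · exact matchingProd_swap_mul_extendDomain_of_lt e hp A τ hlt
  · have hp' : ∀ x, p x ↔ x ≠ j ∧ x ≠ i := fun x => (hp x).trans and_comm
    rw [Equiv.swap_comm, matchingProd_swap_mul_extendDomain_of_lt e hp' A τ hgt, hA.apply]

end MatchingProd

variable {m : ℕ} {R : Type*} [CommRing R]

theorem hafnian_eq_sum_matchingProd (A : Matrix (Fin m) (Fin m) R) :
    A.hafnian = ∑ σ ∈ univ.filter IsPerfectMatching, A.matchingProd σ := by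
  rw [hafnian]
  congr 1
  ext σ
  simp only [mem_filter, IsPerfectMatching]

theorem delPrincipal_eq_submatrix {k : ℕ} (A : Matrix (Fin m) (Fin m) R) {s : Finset (Fin m)}
    (h : sᶜ.card = k) :
    A.delPrincipal (k := k) s = A.submatrix (fun a => (sᶜ.orderIsoOfFin h a : Fin m))
      (fun b => (sᶜ.orderIsoOfFin h b : Fin m)) :=
  dif_pos h

theorem sum_matchingProd_filter_apply_eq (A : Matrix (Fin (m + 2)) (Fin (m + 2)) R)
    (hA : A.IsSymm) {i j : Fin (m + 2)} (hij : i ≠ j) :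
    ∑ σ ∈ univ.filter (fun σ : Perm _ => σ.IsPerfectMatching ∧ σ i = j), A.matchingProd σ =
      A i j * (A.delPrincipal (k := m) {i, j}).hafnian := by
  have hcard : ({i, j}ᶜ : Finset (Fin (m + 2))).card = m := by
    rw [card_compl, card_pair hij, Fintype.card_fin, Nat.add_sub_cancel]
  set e := ({i, j}ᶜ : Finset (Fin (m + 2))).orderIsoOfFin hcard
  have hp : ∀ x, x ∈ ({i, j}ᶜ : Finset (Fin (m + 2))) ↔ x ≠ i ∧ x ≠ j := by simp
  rw [filter_isPerfectMatching_apply_eq e.toEquiv hp hij,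
    sum_image (swap_mul_extendDomain_injective e.toEquiv).injOn, delPrincipal_eq_submatrix A hcard,
    hafnian_eq_sum_matchingProd, mul_sum]
  exact sum_congr rfl fun τ _ => matchingProd_swap_mul_extendDomain e hp A τ hA hij

end Matrix

theorem hafnian_expand_row_general {n : ℕ} {R : Type*} [CommRing R]
    (A : Matrix (Fin (2 * n + 2)) (Fin (2 * n + 2)) R)
    (hsymm : A.IsSymm) (i : Fin (2 * n + 2)) :
    A.hafnian = ∑ j ∈ Finset.univ \ {i},
      A i j * (Matrix.delPrincipal (k := 2 * n) A {i, j}).hafnian := by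
  have hmaps : ∀ σ ∈ univ.filter IsPerfectMatching, σ i ∈ univ \ {i} := fun σ hσ => by
    simpa using (mem_filter.mp hσ).2.2 i
  rw [Matrix.hafnian_eq_sum_matchingProd, ← sum_fiberwise_of_maps_to hmaps]
  refine sum_congr rfl fun j hj => ?_
  rw [filter_filter,
    Matrix.sum_matchingProd_filter_apply_eq A hsymm (by simpa [eq_comm] using hj)]

/-- Hafnian expansion along a row: for a symmetric `2n × 2n` matrix `A` (`n ≥ 1`)
with zero diagonal over a commutative ring and any fixed index `i`,
`hf(A) = Σ_{j ≠ i} a_{ij} · hf(A[i,j])`, where `A[i,j]` deletes rows and columns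
`i` and `j`. -/
theorem hafnian_expand_row {n : ℕ} {R : Type*} [CommRing R]
    (A : Matrix (Fin (2 * n + 2)) (Fin (2 * n + 2)) R)
    (hsymm : A.IsSymm) (hdiag : ∀ i, A i i = 0) (i : Fin (2 * n + 2)) :
    A.hafnian = ∑ j ∈ Finset.univ \ {i},
      A i j * (Matrix.delPrincipal (k := 2 * n) A {i, j}).hafnian :=
  hafnian_expand_row_general A hsymm i
end

section
/- If A is an invertible square matrix over a field F, then all leading principal minors of A are nonzero if and only if A admits an LU decomposition, i.e., A = LU with L lower triangular and U upper triangular (both invertible). -/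
/-!
Bordering: write `A = [[A', b], [cᵀ, d]]` with `A'` its leading block of size `n - 1`.
By induction `A' = L' U'`, and then
`A = [[L', 0], [cᵀ U'⁻¹, 1]] * [[U', L'⁻¹ b], [0, d - cᵀ U'⁻¹ L'⁻¹ b]]`,
and both factors are invertible because `A` is. Conversely, as `L` is lower triangular, the leading
`k × k` block of `L U` is the product of those of `L` and `U`, which are triangular with the
(nonzero) diagonal entries of `L` and `U` on their diagonals.
-/

open Matrix

namespace Matrix

variable {R : Type*} {n : ℕ}

theorem submatrix_castLE_mul_of_isLowerTriangular [NonUnitalNonAssocSemiring R] {k : ℕ}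
    (hk : k ≤ n) {L : Matrix (Fin n) (Fin n) R} (hL : L.IsLowerTriangular)
    (U : Matrix (Fin n) (Fin n) R) :
    (L * U).submatrix (Fin.castLE hk) (Fin.castLE hk) =
      L.submatrix (Fin.castLE hk) (Fin.castLE hk) *
        U.submatrix (Fin.castLE hk) (Fin.castLE hk) := by
  ext i j
  refine (Fintype.sum_of_injective _ (Fin.castLE_injective hk) _ _ (fun m hm => ?_)
    fun _ => rfl).symm
  have hi : Fin.castLE hk i < m := by
    rw [Fin.range_castLE, Set.mem_ofPred, not_lt] at hm
    exact i.isLt.trans_le hm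
  exact mul_eq_zero_of_left (hL hi) _

theorem isUnit_det_submatrix_castLE_of_isUpperTriangular [CommRing R] {k : ℕ} (hk : k ≤ n)
    {M : Matrix (Fin n) (Fin n) R} (hM : M.IsUpperTriangular) (hdet : IsUnit M.det) :
    IsUnit (M.submatrix (Fin.castLE hk) (Fin.castLE hk)).det := by
  rw [det_of_isUpperTriangular hM, IsUnit.prod_iff] at hdet
  have hMk : (M.submatrix (Fin.castLE hk) (Fin.castLE hk)).IsUpperTriangular := fun _ _ h => hM h
  rw [det_of_isUpperTriangular hMk, IsUnit.prod_iff]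
  exact fun i _ => hdet _ (Finset.mem_univ _)

theorem isUnit_det_submatrix_castLE_of_isLowerTriangular [CommRing R] {k : ℕ} (hk : k ≤ n)
    {M : Matrix (Fin n) (Fin n) R} (hM : M.IsLowerTriangular) (hdet : IsUnit M.det) :
    IsUnit (M.submatrix (Fin.castLE hk) (Fin.castLE hk)).det := by
  rw [← det_transpose, transpose_submatrix]
  exact isUnit_det_submatrix_castLE_of_isUpperTriangular hk (fun i j h => hM h)
    (by rwa [det_transpose])

/-- The matrix `[[M, b], [cᵀ, d]]`. -/
def bordered (M : Matrix (Fin n) (Fin n) R) (b c : Fin n → R) (d : R) :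
    Matrix (Fin (n + 1)) (Fin (n + 1)) R :=
  of fun i j => Fin.lastCases (Fin.lastCases d c j) (fun p => Fin.lastCases (b p) (M p) j) i

theorem eq_bordered (A : Matrix (Fin (n + 1)) (Fin (n + 1)) R) :
    A = bordered (A.submatrix Fin.castSucc Fin.castSucc) (fun i => A i.castSucc (Fin.last n))
      (fun j => A (Fin.last n) j.castSucc) (A (Fin.last n) (Fin.last n)) := by
  ext i j
  induction i using Fin.lastCases <;> induction j using Fin.lastCases <;> simp [bordered]

theorem bordered_mul_bordered [CommSemiring R] (M M' : Matrix (Fin n) (Fin n) R)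
    (b c b' c' : Fin n → R) (d d' : R) :
    bordered M b c d * bordered M' b' c' d' =
      bordered (M * M' + vecMulVec b c') (M *ᵥ b' + d' • b) (c ᵥ* M' + d • c')
        (c ⬝ᵥ b' + d * d') := by
  ext i j
  induction i using Fin.lastCases <;> induction j using Fin.lastCases <;>
    simp [bordered, mul_apply, Fin.sum_univ_castSucc, mulVec, vecMul, dotProduct, vecMulVec,
      mul_comm]

theorem IsLowerTriangular.bordered [Zero R] {M : Matrix (Fin n) (Fin n) R}
    (hM : M.IsLowerTriangular) (c : Fin n → R) (d : R) :
    (bordered M 0 c d).IsLowerTriangular := by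
  intro i j hij
  rw [OrderDual.toDual_lt_toDual] at hij
  induction i using Fin.lastCases with
  | last => exact absurd hij (Fin.le_last j).not_gt
  | cast p =>
    induction j using Fin.lastCases with
    | last => simp [Matrix.bordered]
    | cast q => simpa [Matrix.bordered] using hM (Fin.castSucc_lt_castSucc_iff.1 hij)

theorem IsUpperTriangular.bordered [Zero R] {M : Matrix (Fin n) (Fin n) R}
    (hM : M.IsUpperTriangular) (b : Fin n → R) (d : R) :
    (bordered M b 0 d).IsUpperTriangular := by
  intro i j hij
  induction j using Fin.lastCases with
  | last => exact absurd hij (Fin.le_last i).not_gt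
  | cast q =>
    induction i using Fin.lastCases with
    | last => simp [Matrix.bordered]
    | cast p => simpa [Matrix.bordered] using hM (Fin.castSucc_lt_castSucc_iff.1 hij)

theorem exists_lu_of_forall_det_submatrix_castLE_ne_zero {F : Type*} [Field F] :
    ∀ {n : ℕ} (A : Matrix (Fin n) (Fin n) F),
      (∀ (k : ℕ) (hk : k ≤ n), (A.submatrix (Fin.castLE hk) (Fin.castLE hk)).det ≠ 0) →
      ∃ L U : Matrix (Fin n) (Fin n) F, L.IsLowerTriangular ∧ U.IsUpperTriangular ∧
        IsUnit L.det ∧ IsUnit U.det ∧ A = L * U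
  | 0, A, _ => ⟨1, 1, blockTriangular_one, blockTriangular_one, by simp, by simp,
      Subsingleton.elim _ _⟩
  | n + 1, A, hA => by
    obtain ⟨L, U, hL, hU, hLdet, hUdet, hLU⟩ :=
      exists_lu_of_forall_det_submatrix_castLE_ne_zero (A.submatrix Fin.castSucc Fin.castSucc)
        fun k hk => hA k (hk.trans n.le_succ)
    set b : Fin n → F := fun i => A i.castSucc (Fin.last n)
    set c : Fin n → F := fun j => A (Fin.last n) j.castSucc
    set x := c ᵥ* U⁻¹
    set y := L⁻¹ *ᵥ b
    set s := A (Fin.last n) (Fin.last n) - x ⬝ᵥ y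
    have hfactor : A = bordered L 0 x 1 * bordered U y 0 s := by
      rw [bordered_mul_bordered, vecMulVec_zero, add_zero, ← hLU, mulVec_mulVec,
        mul_nonsing_inv _ hLdet, one_mulVec, vecMul_vecMul, nonsing_inv_mul _ hUdet, vecMul_one]
      simp only [smul_zero, add_zero, one_mul, s, add_sub_cancel]
      exact eq_bordered A
    have hdet : IsUnit ((bordered L 0 x 1).det * (bordered U y 0 s).det) := by
      rw [← det_mul, ← hfactor, isUnit_iff_ne_zero]
      simpa using hA (n + 1) le_rfl
    exact ⟨_, _, hL.bordered x 1, hU.bordered y _, isUnit_of_mul_isUnit_left hdet,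
      isUnit_of_mul_isUnit_right hdet, hfactor⟩

end Matrix

theorem leading_minors_ne_zero_iff_lu_general {n : ℕ} {F : Type*} [Field F]
    (A : Matrix (Fin n) (Fin n) F) :
    (∀ (k : ℕ) (hk : k ≤ n), (A.submatrix (Fin.castLE hk) (Fin.castLE hk)).det ≠ 0) ↔
      ∃ L U : Matrix (Fin n) (Fin n) F,
        (∀ i j, i < j → L i j = 0) ∧ (∀ i j, j < i → U i j = 0) ∧
          IsUnit L.det ∧ IsUnit U.det ∧ A = L * U := by
  refine ⟨exists_lu_of_forall_det_submatrix_castLE_ne_zero A, ?_⟩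
  rintro ⟨L, U, hL, hU, hLdet, hUdet, rfl⟩ k hk
  have hL : L.IsLowerTriangular := fun i j h => hL i j h
  rw [submatrix_castLE_mul_of_isLowerTriangular hk hL, det_mul]
  exact ((isUnit_det_submatrix_castLE_of_isLowerTriangular hk hL hLdet).mul
    (isUnit_det_submatrix_castLE_of_isUpperTriangular hk (fun i j h => hU i j h) hUdet)).ne_zero

/-- For an invertible matrix `A` over a field, all leading principal minors of `A`
are nonzero iff `A` admits an LU decomposition `A = L * U` with `L` lower
triangular, `U` upper triangular, both invertible. -/
theorem leading_minors_ne_zero_iff_lu {n : ℕ} {F : Type*} [Field F]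
    (A : Matrix (Fin n) (Fin n) F) (hA : IsUnit A.det) :
    (∀ (k : ℕ) (hk : k ≤ n), (A.submatrix (Fin.castLE hk) (Fin.castLE hk)).det ≠ 0) ↔
      ∃ L U : Matrix (Fin n) (Fin n) F,
        (∀ i j, i < j → L i j = 0) ∧ (∀ i j, j < i → U i j = 0) ∧
          IsUnit L.det ∧ IsUnit U.det ∧ A = L * U :=
  leading_minors_ne_zero_iff_lu_general A
end
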